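/- (Ramanujan's Gaussian beta integral) Let τ ∈ ℍ, q = exp(2πiτ), and 0 < |a|, |b| < 1. Then ∫_{-∞}^∞ (-a q^{1/2+x}; q)_∞ · (-b q^{1/2-x}; q)_∞ · q^{x²/2} dx = (1/√(-iτ)) · (ab;q)_∞ / ((a;q)_∞ (b;q)_∞). -/

import Mathlib

open scoped Real

/-- The infinite q-Pochhammer symbol `(a;q)_∞ = ∏_{j=0}^∞ (1 - a q^j)`. -/
noncomputable def qPochInf (a q : ℂ) : ℂ := ∏' n : ℕ, (1 - a * q ^ n)

/-!
Expand both q-Pochhammer symbols of the integrand by Euler's identity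
`(-z;q)_∞ = ∑ q^(n choose 2) zⁿ / (q;q)_n`. With `q = e^{2πiτ}`, the `(m, n)` term of the product
times `q^{x²/2}` is `aᵐ bⁿ q^{mn} / ((q;q)_m (q;q)_n)` times the Gaussian `q^{(x+m-n)²/2}`, so by
translation invariance every term integrates to its coefficient times `∫ q^{x²/2} dx = 1/√(-iτ)`.
The remaining double series is summed by the q-binomial theorem, first in `n` (in the form
`∑ zⁿ / (q;q)_n = 1 / (z;q)_∞`), then in `m`.

Euler's identity and the q-binomial theorem are both the statement
`(Az;q)_∞ ∑ cₙ zⁿ = (-Bz;q)_∞` for `cₙ = ∏_{k<n} (A + B qᵏ) / (q;q)_n`: the series `F` satisfies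
`(1 - Az) F(z) = (1 + Bz) F(qz)`, and iterating this `N` times and letting `N → ∞` uses only
`F(qᴺ z) → F(0) = 1`.
-/

open Complex Filter Topology Finset MeasureTheory

theorem summable_norm_of_norm_succ_le {E : Type*} [SeminormedAddCommGroup E] {f : ℕ → E}
    {ρ : ℕ → ℝ} {l : ℝ} (hl : l < 1) (hρ : Tendsto ρ atTop (𝓝 l))
    (hf : ∀ n, ‖f (n + 1)‖ ≤ ρ n * ‖f n‖) : Summable (‖f ·‖) := by
  refine summable_of_ratio_norm_eventually_le (r := (l + 1) / 2) (by linarith) ?_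
  filter_upwards [hρ.eventually (eventually_le_nhds (show l < (l + 1) / 2 by linarith))] with n hn
  simp only [norm_norm]
  exact (hf n).trans (mul_le_mul_of_nonneg_right hn (norm_nonneg _))

theorem continuousAt_tsum_mul_pow {𝕜 : Type*} [NormedField 𝕜] [CompleteSpace 𝕜] {c : ℕ → 𝕜}
    {r : ℝ} (hr : 0 < r) (hc : Summable fun n => ‖c n‖ * r ^ n) :
    ContinuousAt (fun z => ∑' n, c n * z ^ n) 0 := by
  have hcont : ContinuousOn (fun z => ∑' n, c n * z ^ n) (Metric.closedBall 0 r) := by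
    refine continuousOn_tsum (fun n => by fun_prop) hc fun n z hz => ?_
    rw [norm_mul, norm_pow]
    gcongr
    simpa using hz
  exact hcont.continuousAt (Metric.closedBall_mem_nhds 0 hr)

theorem integral_tsum_mul_comp_add {ι : Type*} [Countable ι] {g : ℝ → ℂ} (hg : Integrable g)
    {w : ι → ℂ} (hw : Summable (‖w ·‖)) (t : ι → ℝ) :
    ∫ x, ∑' i, w i * g (x + t i) = (∑' i, w i) * ∫ x, g x := by
  have hint : ∀ i, Integrable fun x => w i * g (x + t i) :=
    fun i => (hg.comp_add_right (t i)).const_mul (w i)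
  have hnorm : ∀ i, ∫ x, ‖w i * g (x + t i)‖ = ‖w i‖ * ∫ x, ‖g x‖ := fun i => by
    simp only [norm_mul, integral_const_mul, integral_add_right_eq_self fun x => ‖g x‖]
  rw [← integral_tsum_of_summable_integral_norm hint (by simpa only [hnorm] using hw.mul_right _),
    ← tsum_mul_right]
  simp only [integral_const_mul, integral_add_right_eq_self g]

theorem norm_cexp_two_pi_I_mul_lt_one {τ : ℂ} (hτ : 0 < τ.im) : ‖cexp (2 * π * I * τ)‖ < 1 := by
  simpa [Function.Periodic.qParam] using Function.Periodic.norm_qParam_lt_one one_pos hτ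

theorem integrable_cexp_pi_mul_I_mul_sq {τ : ℂ} (hτ : 0 < τ.im) :
    Integrable fun x : ℝ => cexp (π * I * τ * x ^ 2) := by
  simpa using
    integrable_cexp_neg_mul_sq (b := -(π * I * τ)) (by simpa using mul_pos Real.pi_pos hτ)

theorem integral_cexp_pi_mul_I_mul_sq {τ : ℂ} (hτ : 0 < τ.im) :
    ∫ x : ℝ, cexp (π * I * τ * x ^ 2) = ((-I * τ) ^ (1 / 2 : ℂ))⁻¹ := by
  have harg : (-I * τ).arg ≠ π := by
    rw [Ne, arg_eq_pi_iff]
    simp [hτ.not_gt]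
  have h := integral_gaussian_complex (b := -(π * I * τ)) (by simpa using mul_pos Real.pi_pos hτ)
  rw [show (π : ℂ) / -(π * I * τ) = (-I * τ)⁻¹ by field_simp] at h
  rw [← inv_cpow _ _ harg, ← h]
  simp

theorem one_sub_ne_zero_of_norm_lt_one {w : ℂ} (hw : ‖w‖ < 1) : 1 - w ≠ 0 := by
  rw [sub_ne_zero]
  rintro rfl
  simp at hw

theorem norm_mul_pow_lt_one {a q : ℂ} (hq : ‖q‖ ≤ 1) (ha : ‖a‖ < 1) (k : ℕ) :
    ‖a * q ^ k‖ < 1 := by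
  rw [norm_mul, norm_pow]
  exact (mul_le_of_le_one_right (norm_nonneg a) (pow_le_one₀ (norm_nonneg q) hq)).trans_lt ha

noncomputable def qPoch (a q : ℂ) (n : ℕ) : ℂ := ∏ k ∈ range n, (1 - a * q ^ k)

section QSeries

variable {q : ℂ}

theorem qPoch_succ (a q : ℂ) (n : ℕ) : qPoch a q (n + 1) = qPoch a q n * (1 - a * q ^ n) :=
  prod_range_succ _ _

theorem qPoch_ne_zero (hq : ‖q‖ < 1) {a : ℂ} (ha : ‖a‖ < 1) (n : ℕ) : qPoch a q n ≠ 0 :=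
  prod_ne_zero_iff.mpr fun k _ => one_sub_ne_zero_of_norm_lt_one (norm_mul_pow_lt_one hq.le ha k)

theorem multipliable_one_sub_mul_pow (hq : ‖q‖ < 1) (a : ℂ) :
    Multipliable fun n : ℕ => 1 - a * q ^ n := by
  simp_rw [sub_eq_add_neg]
  refine multipliable_one_add_of_summable ?_
  simpa [norm_pow] using (summable_geometric_of_lt_one (norm_nonneg q) hq).mul_left ‖a‖

theorem tendsto_qPoch (hq : ‖q‖ < 1) (a : ℂ) :
    Tendsto (qPoch a q) atTop (𝓝 (qPochInf a q)) :=
  (multipliable_one_sub_mul_pow hq a).hasProd.tendsto_prod_nat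

theorem qPochInf_eq_qPoch_mul (hq : ‖q‖ < 1) (a : ℂ) (m : ℕ) :
    qPochInf a q = qPoch a q m * qPochInf (a * q ^ m) q := by
  have hshift : ∀ n, 1 - a * q ^ (n + m) = 1 - a * q ^ m * q ^ n := fun n => by ring
  have h := Multipliable.prod_mul_tprod_nat_mul' (f := fun n => 1 - a * q ^ n) (k := m)
    (by simpa only [hshift] using multipliable_one_sub_mul_pow hq (a * q ^ m))
  rw [qPochInf, qPochInf, qPoch]
  simpa only [hshift] using h.symm

theorem qPochInf_zero (q : ℂ) : qPochInf 0 q = 1 := by simp [qPochInf]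

noncomputable def qBinomCoeff (A B q : ℂ) (n : ℕ) : ℂ :=
  (∏ k ∈ range n, (A + B * q ^ k)) / qPoch q q n

variable {A B : ℂ}

theorem qBinomCoeff_zero : qBinomCoeff A B q 0 = 1 := by simp [qBinomCoeff, qPoch]

theorem qBinomCoeff_succ (n : ℕ) :
    qBinomCoeff A B q (n + 1) = qBinomCoeff A B q n * ((A + B * q ^ n) / (1 - q ^ (n + 1))) := by
  rw [qBinomCoeff, qBinomCoeff, prod_range_succ, qPoch_succ, ← pow_succ', div_mul_div_comm]

theorem qBinomCoeff_succ_mul (hq : ‖q‖ < 1) (n : ℕ) :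
    qBinomCoeff A B q (n + 1) * (1 - q ^ (n + 1)) = qBinomCoeff A B q n * (A + B * q ^ n) := by
  have hne : 1 - q ^ (n + 1) ≠ 0 := by
    simpa [← pow_succ'] using one_sub_ne_zero_of_norm_lt_one (norm_mul_pow_lt_one hq.le hq n)
  rw [qBinomCoeff_succ, mul_assoc, div_mul_cancel₀ _ hne]

theorem summable_norm_qBinomCoeff_mul_pow (hq : ‖q‖ < 1) {z : ℂ} (hz : ‖A * z‖ < 1) :
    Summable fun n => ‖qBinomCoeff A B q n * z ^ n‖ := by
  have hratio : Tendsto (fun n : ℕ => z * ((A + B * q ^ n) / (1 - q ^ (n + 1)))) atTop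
      (𝓝 (z * ((A + B * 0) / (1 - q * 0)))) := by
    have hpow := tendsto_pow_atTop_nhds_zero_of_norm_lt_one hq
    simp_rw [pow_succ']
    exact tendsto_const_nhds.mul (((hpow.const_mul B).const_add A).div
      ((hpow.const_mul q).const_sub 1) (by simp))
  refine summable_norm_of_norm_succ_le (by simpa [mul_comm] using hz) hratio.norm fun n => ?_
  rw [qBinomCoeff_succ, pow_succ, ← norm_mul]
  exact le_of_eq (by ring_nf)

theorem tsum_qBinomCoeff_functional_eq (hq : ‖q‖ < 1) {z : ℂ} (hz : ‖A * z‖ < 1) :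
    (1 - A * z) * ∑' n, qBinomCoeff A B q n * z ^ n =
      (1 + B * z) * ∑' n, qBinomCoeff A B q n * (q * z) ^ n := by
  have hqz : ‖A * (q * z)‖ < 1 := by
    simpa [mul_left_comm, mul_comm] using norm_mul_pow_lt_one hq.le hz 1
  have hs := (summable_norm_qBinomCoeff_mul_pow (B := B) hq hz).of_norm
  have hs' := (summable_norm_qBinomCoeff_mul_pow (B := B) hq hqz).of_norm
  suffices h : ∑' n, qBinomCoeff A B q n * z ^ n - ∑' n, qBinomCoeff A B q n * (q * z) ^ n =
      A * z * ∑' n, qBinomCoeff A B q n * z ^ n +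
        B * z * ∑' n, qBinomCoeff A B q n * (q * z) ^ n by
    linear_combination h
  -- the `n = 0` terms of the difference cancel; the rest is shifted by one and matched termwise
  rw [← hs.tsum_sub hs', (hs.sub hs').tsum_eq_zero_add, ← tsum_mul_left, ← tsum_mul_left,
    ← (hs.mul_left _).tsum_add (hs'.mul_left _)]
  simp only [pow_zero, mul_one, sub_self, zero_add]
  refine tsum_congr fun n => ?_
  linear_combination z ^ (n + 1) * qBinomCoeff_succ_mul (A := A) (B := B) hq n

theorem qPoch_mul_tsum_qBinomCoeff (hq : ‖q‖ < 1) {z : ℂ} (hz : ‖A * z‖ < 1) (N : ℕ) :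
    qPoch (A * z) q N * ∑' n, qBinomCoeff A B q n * z ^ n =
      qPoch (-B * z) q N * ∑' n, qBinomCoeff A B q n * (q ^ N * z) ^ n := by
  induction N with
  | zero => simp [qPoch]
  | succ N ih =>
    have hN : ‖A * (q ^ N * z)‖ < 1 := by
      simpa [mul_left_comm, mul_comm] using norm_mul_pow_lt_one hq.le hz N
    have feq := tsum_qBinomCoeff_functional_eq (B := B) hq hN
    rw [← mul_assoc q, ← pow_succ'] at feq
    rw [qPoch_succ, qPoch_succ]
    linear_combination (1 - A * z * q ^ N) * ih + qPoch (-B * z) q N * feq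

theorem qPochInf_mul_tsum_qBinomCoeff (hq : ‖q‖ < 1) {z : ℂ} (hz : ‖A * z‖ < 1) :
    qPochInf (A * z) q * ∑' n, qBinomCoeff A B q n * z ^ n = qPochInf (-B * z) q := by
  set r : ℝ := (‖A‖ + 1)⁻¹
  have hr : 0 < r := by positivity
  have hAr : ‖A * (r : ℂ)‖ < 1 := by
    rw [norm_mul, Complex.norm_real, Real.norm_of_nonneg hr.le, ← div_eq_mul_inv,
      div_lt_one (by positivity)]
    linarith
  have hcont := continuousAt_tsum_mul_pow (c := qBinomCoeff A B q) hr <|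
    (summable_norm_qBinomCoeff_mul_pow (B := B) hq hAr).congr
      fun n => by rw [norm_mul, norm_pow, Complex.norm_real, Real.norm_of_nonneg hr.le]
  have htail : Tendsto (fun N : ℕ => ∑' n, qBinomCoeff A B q n * (q ^ N * z) ^ n) atTop
      (𝓝 1) := by
    have h0 : Tendsto (fun N : ℕ => q ^ N * z) atTop (𝓝 0) := by
      simpa using (tendsto_pow_atTop_nhds_zero_of_norm_lt_one hq).mul_const z
    have hF0 : ∑' n, qBinomCoeff A B q n * (0 : ℂ) ^ n = 1 := by
      rw [tsum_eq_single 0 fun n hn => by simp [hn]]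
      simp [qBinomCoeff_zero]
    rw [← hF0]
    exact hcont.tendsto.comp h0
  have hlim := ((tendsto_qPoch hq (-B * z)).mul htail).congr
    fun N => (qPoch_mul_tsum_qBinomCoeff hq hz N).symm
  rw [mul_one] at hlim
  exact tendsto_nhds_unique ((tendsto_qPoch hq (A * z)).mul_const _) hlim

theorem qBinomCoeff_zero_one (n : ℕ) : qBinomCoeff 0 1 q n = q ^ n.choose 2 / qPoch q q n := by
  rw [qBinomCoeff, Nat.choose_two_right, ← sum_range_id, ← prod_pow_eq_pow_sum]
  simp

theorem qBinomCoeff_one_zero (n : ℕ) : qBinomCoeff 1 0 q n = (qPoch q q n)⁻¹ := by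
  simp [qBinomCoeff]

theorem qBinomCoeff_one_neg (c : ℂ) (n : ℕ) :
    qBinomCoeff 1 (-c) q n = qPoch c q n / qPoch q q n := by
  simp [qBinomCoeff, qPoch, sub_eq_add_neg]

theorem summable_norm_pow_choose_two_div_qPoch_mul_pow (hq : ‖q‖ < 1) (z : ℂ) :
    Summable fun n => ‖q ^ n.choose 2 / qPoch q q n * z ^ n‖ := by
  simpa [qBinomCoeff_zero_one] using
    summable_norm_qBinomCoeff_mul_pow (A := 0) (B := 1) (z := z) hq (by simp)

theorem qPochInf_neg_eq_tsum (hq : ‖q‖ < 1) (z : ℂ) :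
    qPochInf (-z) q = ∑' n, q ^ n.choose 2 / qPoch q q n * z ^ n := by
  simpa [qPochInf_zero, qBinomCoeff_zero_one] using
    (qPochInf_mul_tsum_qBinomCoeff (A := 0) (B := 1) (z := z) hq (by simp)).symm

theorem summable_norm_pow_div_qPoch (hq : ‖q‖ < 1) {z : ℂ} (hz : ‖z‖ < 1) :
    Summable fun n => ‖z ^ n / qPoch q q n‖ := by
  simpa [qBinomCoeff_one_zero, div_eq_inv_mul] using
    summable_norm_qBinomCoeff_mul_pow (A := 1) (B := 0) hq (by simpa using hz)

theorem qPochInf_mul_tsum_pow_div_qPoch (hq : ‖q‖ < 1) {z : ℂ} (hz : ‖z‖ < 1) :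
    qPochInf z q * ∑' n, z ^ n / qPoch q q n = 1 := by
  simpa [qPochInf_zero, qBinomCoeff_one_zero, div_eq_inv_mul] using
    qPochInf_mul_tsum_qBinomCoeff (A := 1) (B := 0) hq (by simpa using hz)

theorem qPochInf_ne_zero (hq : ‖q‖ < 1) {z : ℂ} (hz : ‖z‖ < 1) : qPochInf z q ≠ 0 :=
  left_ne_zero_of_mul_eq_one (qPochInf_mul_tsum_pow_div_qPoch hq hz)

theorem tsum_qPoch_div_qPoch_mul_pow (hq : ‖q‖ < 1) (c : ℂ) {z : ℂ} (hz : ‖z‖ < 1) :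
    ∑' n, qPoch c q n / qPoch q q n * z ^ n = qPochInf (c * z) q / qPochInf z q := by
  rw [eq_div_iff (qPochInf_ne_zero hq hz), mul_comm]
  simpa [qBinomCoeff_one_neg] using
    qPochInf_mul_tsum_qBinomCoeff (A := 1) (B := -c) hq (by simpa using hz)

noncomputable def gaussBetaTerm (a b q : ℂ) (p : ℕ × ℕ) : ℂ :=
  a ^ p.1 * b ^ p.2 * q ^ (p.1 * p.2) / (qPoch q q p.1 * qPoch q q p.2)

variable {a b : ℂ}

theorem norm_gaussBetaTerm_le (hq : ‖q‖ < 1) (p : ℕ × ℕ) :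
    ‖gaussBetaTerm a b q p‖ ≤ ‖a ^ p.1 / qPoch q q p.1 * (b ^ p.2 / qPoch q q p.2)‖ := by
  rw [gaussBetaTerm, mul_div_right_comm, mul_div_mul_comm, norm_mul _ (q ^ _), norm_pow]
  exact mul_le_of_le_one_right (norm_nonneg _) (pow_le_one₀ (norm_nonneg q) hq.le)

theorem summable_norm_gaussBetaTerm (hq : ‖q‖ < 1) (ha : ‖a‖ < 1) (hb : ‖b‖ < 1) :
    Summable fun p => ‖gaussBetaTerm a b q p‖ := by
  have h := (summable_norm_pow_div_qPoch hq ha).mul_norm (summable_norm_pow_div_qPoch hq hb)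
  exact h.of_nonneg_of_le (fun _ => norm_nonneg _) (norm_gaussBetaTerm_le hq)

theorem tsum_gaussBetaTerm_right (hq : ‖q‖ < 1) (hb : ‖b‖ < 1) (m : ℕ) :
    ∑' n, gaussBetaTerm a b q (m, n) = qPoch b q m / qPoch q q m * a ^ m / qPochInf b q := by
  have hinner : ∑' n, (b * q ^ m) ^ n / qPoch q q n = (qPochInf (b * q ^ m) q)⁻¹ :=
    eq_inv_of_mul_eq_one_right
      (qPochInf_mul_tsum_pow_div_qPoch hq (norm_mul_pow_lt_one hq.le hb m))
  have hterm : ∀ n, gaussBetaTerm a b q (m, n) =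
      a ^ m / qPoch q q m * ((b * q ^ m) ^ n / qPoch q q n) :=
    fun n => by rw [gaussBetaTerm, mul_pow, ← pow_mul, mul_comm m n]; ring
  rw [tsum_congr hterm, tsum_mul_left, hinner, qPochInf_eq_qPoch_mul hq b m]
  field_simp [qPoch_ne_zero hq hb m]

theorem tsum_gaussBetaTerm (hq : ‖q‖ < 1) (ha : ‖a‖ < 1) (hb : ‖b‖ < 1) :
    ∑' p, gaussBetaTerm a b q p = qPochInf (a * b) q / (qPochInf a q * qPochInf b q) := by
  simp_rw [(summable_norm_gaussBetaTerm hq ha hb).of_norm.tsum_prod,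
    tsum_gaussBetaTerm_right hq hb, div_eq_mul_inv _ (qPochInf b q), tsum_mul_right,
    tsum_qPoch_div_qPoch_mul_pow hq b ha, mul_comm b a]
  ring

end QSeries

theorem qPochInf_mul_qPochInf_mul_cexp_eq_tsum {τ q : ℂ} (hq : q = cexp (2 * π * I * τ))
    (hq1 : ‖q‖ < 1) (a b : ℂ) (x : ℝ) :
    qPochInf (-a * cexp (2 * π * I * τ * (1 / 2 + x))) q *
      qPochInf (-b * cexp (2 * π * I * τ * (1 / 2 - x))) q * cexp (π * I * τ * x ^ 2) =
    ∑' p : ℕ × ℕ, gaussBetaTerm a b q p * cexp (π * I * τ * ↑(x + ((p.1 : ℝ) - p.2)) ^ 2) := by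
  rw [neg_mul, neg_mul, qPochInf_neg_eq_tsum hq1, qPochInf_neg_eq_tsum hq1,
    tsum_mul_tsum_of_summable_norm (summable_norm_pow_choose_two_div_qPoch_mul_pow hq1 _)
      (summable_norm_pow_choose_two_div_qPoch_mul_pow hq1 _),
    ← tsum_mul_right]
  refine tsum_congr fun ⟨m, n⟩ => ?_
  have hpow : ∀ k : ℕ, q ^ k = cexp (k * (2 * π * I * τ)) := fun k => by rw [hq, exp_nat_mul]
  have hexp : cexp (m.choose 2 * (2 * π * I * τ)) * cexp (m * (2 * π * I * τ * (1 / 2 + x))) *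
      cexp (n.choose 2 * (2 * π * I * τ)) * cexp (n * (2 * π * I * τ * (1 / 2 - x))) *
      cexp (π * I * τ * x ^ 2) =
      cexp ((m * n : ℕ) * (2 * π * I * τ)) * cexp (π * I * τ * ↑(x + ((m : ℝ) - n)) ^ 2) := by
    simp only [← exp_add]
    congr 1
    push_cast [Nat.cast_choose_two]
    ring
  rw [gaussBetaTerm, hpow, hpow, hpow, mul_pow, mul_pow, ← exp_nat_mul, ← exp_nat_mul]
  linear_combination (a ^ m * b ^ n / (qPoch q q m * qPoch q q n)) * hexp

theorem ramanujan_gaussian_beta_integral_general (τ a b : ℂ) (hτ : 0 < τ.im)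
    (q : ℂ) (hq : q = Complex.exp (2 * (π : ℂ) * Complex.I * τ))
    (ha : ‖a‖ < 1) (hb : ‖b‖ < 1) :
    (∫ x : ℝ,
      qPochInf (-a * Complex.exp (2 * (π : ℂ) * Complex.I * τ * (1 / 2 + (x : ℂ)))) q *
      qPochInf (-b * Complex.exp (2 * (π : ℂ) * Complex.I * τ * (1 / 2 - (x : ℂ)))) q *
      Complex.exp ((π : ℂ) * Complex.I * τ * (x : ℂ) ^ 2)) =
    ((-Complex.I * τ) ^ (1 / 2 : ℂ))⁻¹ *
      (qPochInf (a * b) q / (qPochInf a q * qPochInf b q)) := by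
  have hq1 : ‖q‖ < 1 := hq ▸ norm_cexp_two_pi_I_mul_lt_one hτ
  simp_rw [qPochInf_mul_qPochInf_mul_cexp_eq_tsum hq hq1 a b]
  rw [integral_tsum_mul_comp_add (integrable_cexp_pi_mul_I_mul_sq hτ)
      (summable_norm_gaussBetaTerm hq1 ha hb),
    tsum_gaussBetaTerm hq1 ha hb, integral_cexp_pi_mul_I_mul_sq hτ, mul_comm]

/-- Ramanujan's Gaussian beta integral: for `τ ∈ ℍ`, `q = exp(2πiτ)` and
`0 < |a|,|b| < 1`,
`∫_{-∞}^∞ (-aq^{1/2+x};q)_∞ (-bq^{1/2-x};q)_∞ q^{x²/2} dx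
= (1/√(-iτ)) (ab;q)_∞ / ((a;q)_∞ (b;q)_∞)`. -/
theorem ramanujan_gaussian_beta_integral (τ a b : ℂ) (hτ : 0 < τ.im)
    (q : ℂ) (hq : q = Complex.exp (2 * (π : ℂ) * Complex.I * τ))
    (ha0 : a ≠ 0) (hb0 : b ≠ 0) (ha : ‖a‖ < 1) (hb : ‖b‖ < 1) :
    (∫ x : ℝ,
      qPochInf (-a * Complex.exp (2 * (π : ℂ) * Complex.I * τ * (1 / 2 + (x : ℂ)))) q *
      qPochInf (-b * Complex.exp (2 * (π : ℂ) * Complex.I * τ * (1 / 2 - (x : ℂ)))) q *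
      Complex.exp ((π : ℂ) * Complex.I * τ * (x : ℂ) ^ 2)) =
    ((-Complex.I * τ) ^ (1 / 2 : ℂ))⁻¹ *
      (qPochInf (a * b) q / (qPochInf a q * qPochInf b q)) :=
  ramanujan_gaussian_beta_integral_general τ a b hτ q hq ha hb
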